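/- arXiv:2303.07382 — 3 statements merged into one kernel-verified Lean document; each statement's English description precedes it below -/
import Mathlib

section
/- Let γpp, γmm, γpm ≥ 0 with Γ = γpp + γmm + 2γpm > 0, and let f ∈ L²(ℝ, ℂ) with ∫_ℝ |f|² = 1. Then the transmission probability of a frequency-matched two-photon input, T = ∫_ℝ |f(ω̄)|² · |1 − γpp/(Γ/2 + i(ω₀ − ω̄))|² dω̄, satisfies T ≥ 1 − 4γpp γmm/Γ² − 8γpp γpm/Γ². -/
/-!
With `κ = Γ/2`, the Lorentzian factor is `|1 - γ⁺⁺/(κ + i x)|² = ((κ - γ⁺⁺)² + x²)/(κ² + x²)`.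
Since `0 ≤ γ⁺⁺ ≤ Γ` gives `(κ - γ⁺⁺)² ≤ κ²`, this ratio is smallest at `x = 0`, where it equals
`(Γ - 2γ⁺⁺)²/Γ²`; and `Γ² - (Γ - 2γ⁺⁺)² = 4γ⁺⁺(Γ - γ⁺⁺) = 4γ⁺⁺γ⁻⁻ + 8γ⁺⁺γ⁺⁻`. Averaging the
pointwise bound against the probability density `|f|²` gives the theorem.
-/

open MeasureTheory

lemma div_le_add_div_add {a b t : ℝ} (hab : a ≤ b) (hb : 0 < b) (ht : 0 ≤ t) :
    a / b ≤ (a + t) / (b + t) := by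
  rw [div_le_div_iff₀ hb (by positivity)]
  nlinarith

lemma add_div_add_le_div_add_one {a b t : ℝ} (ha : 0 ≤ a) (hb : 0 < b) (ht : 0 ≤ t) :
    (a + t) / (b + t) ≤ a / b + 1 := by
  rw [add_div]
  exact add_le_add (div_le_div_of_nonneg_left ha hb (by linarith))
    (div_le_one_of_le₀ (by linarith) (by positivity))

lemma ofReal_add_I_mul_ne_zero {κ : ℝ} (hκ : κ ≠ 0) (x : ℝ) : (κ : ℂ) + Complex.I * x ≠ 0 :=
  fun h => hκ (by simpa using congrArg Complex.re h)

lemma norm_one_sub_div_sq (γ κ x : ℝ) (hκ : κ ≠ 0) :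
    ‖1 - (γ : ℂ) / ((κ : ℂ) + Complex.I * x)‖ ^ 2 = ((κ - γ) ^ 2 + x ^ 2) / (κ ^ 2 + x ^ 2) := by
  rw [one_sub_div (ofReal_add_I_mul_ne_zero hκ x), norm_div, div_pow, Complex.sq_norm,
    Complex.sq_norm, Complex.normSq_apply, Complex.normSq_apply]
  simp only [Complex.sub_re, Complex.add_re, Complex.ofReal_re, Complex.mul_re, Complex.I_re,
    zero_mul, Complex.I_im, Complex.ofReal_im, mul_zero, sub_self, add_zero, Complex.sub_im,
    Complex.add_im, Complex.mul_im, one_mul, zero_add, sub_zero]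
  ring

lemma sq_sub_div_sq_le_norm_one_sub_div_sq {γ κ : ℝ} (hγ : 0 ≤ γ) (hγκ : γ ≤ 2 * κ) (hκ : 0 < κ)
    (x : ℝ) : (κ - γ) ^ 2 / κ ^ 2 ≤ ‖1 - (γ : ℂ) / ((κ : ℂ) + Complex.I * x)‖ ^ 2 := by
  rw [norm_one_sub_div_sq γ κ x hκ.ne']
  exact div_le_add_div_add (by nlinarith) (by positivity) (sq_nonneg x)

lemma norm_one_sub_div_sq_le {γ κ : ℝ} (hκ : 0 < κ) (x : ℝ) :
    ‖1 - (γ : ℂ) / ((κ : ℂ) + Complex.I * x)‖ ^ 2 ≤ (κ - γ) ^ 2 / κ ^ 2 + 1 := by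
  rw [norm_one_sub_div_sq γ κ x hκ.ne']
  exact add_div_add_le_div_add_one (sq_nonneg _) (by positivity) (sq_nonneg x)

lemma continuous_norm_one_sub_div_sq (γ : ℝ) {κ : ℝ} (hκ : κ ≠ 0) :
    Continuous fun x : ℝ => ‖1 - (γ : ℂ) / ((κ : ℂ) + Complex.I * x)‖ ^ 2 :=
  .pow (continuous_norm.comp (continuous_const.sub (continuous_const.div (by fun_prop)
    (ofReal_add_I_mul_ne_zero hκ)))) 2

lemma mul_integral_le_integral_mul {α : Type*} [MeasurableSpace α] {μ : Measure α}
    {h g : α → ℝ} {c C : ℝ} (hh : Integrable h μ) (hh₀ : 0 ≤ᵐ[μ] h)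
    (hg : AEStronglyMeasurable g μ) (hgC : ∀ᵐ x ∂μ, ‖g x‖ ≤ C) (hcg : ∀ᵐ x ∂μ, c ≤ g x) :
    c * ∫ x, h x ∂μ ≤ ∫ x, h x * g x ∂μ := by
  rw [← integral_const_mul]
  refine integral_mono_ae (hh.const_mul c) (hh.mul_bdd hg hgC) ?_
  filter_upwards [hh₀, hcg] with x hx hcx
  rw [mul_comm c]
  exact mul_le_mul_of_nonneg_left hcx hx

theorem transmission_probability_lower_bound_general (ω₀ γpp γmm γpm : ℝ)
    (hpp : 0 ≤ γpp) (hmm : 0 ≤ γmm) (hpm : 0 ≤ γpm)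
    (Γ : ℝ) (hΓdef : Γ = γpp + γmm + 2 * γpm) (hΓpos : 0 < Γ)
    (f : ℝ → ℂ)
    (hf : (∫ ω : ℝ, ‖f ω‖ ^ 2) = 1) :
    1 - 4 * γpp * γmm / Γ ^ 2 - 8 * γpp * γpm / Γ ^ 2
      ≤ ∫ ω : ℝ, ‖f ω‖ ^ 2 *
          ‖(1 - (γpp : ℂ) / ((Γ : ℂ) / 2 + Complex.I * ((ω₀ : ℂ) - (ω : ℂ))))‖ ^ 2 := by
  have hκ : 0 < Γ / 2 := by positivity
  have hcast (ω : ℝ) : (Γ : ℂ) / 2 + Complex.I * ((ω₀ : ℂ) - (ω : ℂ))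
      = ((Γ / 2 : ℝ) : ℂ) + Complex.I * ((ω₀ - ω : ℝ) : ℂ) := by
    push_cast
    rfl
  have hconst : 1 - 4 * γpp * γmm / Γ ^ 2 - 8 * γpp * γpm / Γ ^ 2
      = (Γ / 2 - γpp) ^ 2 / (Γ / 2) ^ 2 := by
    field_simp
    subst hΓdef
    ring
  have hint : Integrable (fun ω : ℝ => ‖f ω‖ ^ 2) := .of_integral_ne_zero (by simp [hf])
  simp_rw [hcast, hconst]
  calc (Γ / 2 - γpp) ^ 2 / (Γ / 2) ^ 2
      = (Γ / 2 - γpp) ^ 2 / (Γ / 2) ^ 2 * ∫ ω : ℝ, ‖f ω‖ ^ 2 := by rw [hf, mul_one]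
    _ ≤ _ := mul_integral_le_integral_mul hint (.of_forall fun ω => by positivity)
        ((continuous_norm_one_sub_div_sq γpp hκ.ne').comp
          (continuous_const.sub continuous_id)).aestronglyMeasurable
        (.of_forall fun ω =>
          (Real.norm_of_nonneg (sq_nonneg _)).trans_le (norm_one_sub_div_sq_le hκ (ω₀ - ω)))
        (.of_forall fun ω => sq_sub_div_sq_le_norm_one_sub_div_sq hpp (by linarith) hκ (ω₀ - ω))

/-- Lower bound on the transmission probability of a frequency-matched two-photon
input: `T ≥ 1 − R_max − S_max = 1 − 4γ⁺⁺γ⁻⁻/Γ² − 8γ⁺⁺γ⁺⁻/Γ²`. -/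
theorem transmission_probability_lower_bound (ω₀ γpp γmm γpm : ℝ)
    (hpp : 0 ≤ γpp) (hmm : 0 ≤ γmm) (hpm : 0 ≤ γpm)
    (Γ : ℝ) (hΓdef : Γ = γpp + γmm + 2 * γpm) (hΓpos : 0 < Γ)
    (f : ℝ → ℂ) (hf2 : MemLp f 2 (volume : Measure ℝ))
    (hf : (∫ ω : ℝ, ‖f ω‖ ^ 2) = 1) :
    1 - 4 * γpp * γmm / Γ ^ 2 - 8 * γpp * γpm / Γ ^ 2
      ≤ ∫ ω : ℝ, ‖f ω‖ ^ 2 *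
          ‖(1 - (γpp : ℂ) / ((Γ : ℂ) / 2 + Complex.I * ((ω₀ : ℂ) - (ω : ℂ))))‖ ^ 2 :=
  transmission_probability_lower_bound_general ω₀ γpp γmm γpm hpp hmm hpm Γ hΓdef hΓpos f hf
end

section
/- Let ω₀ ∈ ℝ and let f ∈ L²(ℝ, ℂ) with ∫_ℝ |f|² = 1. Define, for Γ > 0, η(Γ) = ∫_ℝ |f(ω̄)|² · (1 − Γ/(Γ/2 + i(ω₀ − ω̄))) dω̄. Then η(Γ) → −1 as Γ → ∞. (The two-photon overlap ⟨1_c 1_s | 1̃_c 1̃_s⟩ between the ideal and actual scattered states tends to −1 in the limit where the emitter linewidth Γ greatly exceeds the input bandwidth.) -/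
/-!
Writing `z = Γ/2 + i x`, the multiplier `1 - Γ/z = -(conj z)/z` has modulus one and tends to
`1 - 2 = -1` as `Γ → ∞`; dominated convergence with dominating function `|f|²` then gives
`η(Γ) → -∫ |f|² = -1`.
-/

open MeasureTheory Filter Topology Complex

lemma norm_one_sub_div_half_add_I_mul (Γ x : ℝ) :
    ‖1 - (Γ : ℂ) / ((Γ : ℂ) / 2 + I * x)‖ = 1 := by
  rcases eq_or_ne Γ 0 with rfl | hΓ
  · simp
  have hz : (Γ : ℂ) / 2 + I * x ≠ 0 := fun h => hΓ <| by
    simpa using congrArg re h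
  have hquot : 1 - (Γ : ℂ) / ((Γ : ℂ) / 2 + I * x)
      = -(starRingEnd ℂ ((Γ : ℂ) / 2 + I * x)) / ((Γ : ℂ) / 2 + I * x) := by
    rw [eq_div_iff hz, sub_mul, one_mul, div_mul_cancel₀ _ hz]
    apply Complex.ext <;> simp [map_ofNat]
    ring
  rw [hquot, norm_div, norm_neg, Complex.norm_conj, div_self (norm_ne_zero_iff.mpr hz)]

lemma tendsto_one_sub_div_half_add_I_mul (x : ℝ) :
    Tendsto (fun Γ : ℝ => 1 - (Γ : ℂ) / ((Γ : ℂ) / 2 + I * x)) atTop (𝓝 (-1)) := by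
  have hinv : Tendsto (fun Γ : ℝ => ((Γ : ℂ))⁻¹) atTop (𝓝 0) := by
    simpa [Function.comp_def] using (continuous_ofReal.tendsto 0).comp tendsto_inv_atTop_zero
  have hrecip : Tendsto (fun Γ : ℝ => (2⁻¹ + I * x * (Γ : ℂ)⁻¹)⁻¹) atTop (𝓝 2) := by
    simpa using (tendsto_const_nhds.add (tendsto_const_nhds.mul hinv)).inv₀
      (by norm_num : (2⁻¹ + I * x * 0 : ℂ) ≠ 0)
  have hquot : Tendsto (fun Γ : ℝ => (Γ : ℂ) / ((Γ : ℂ) / 2 + I * x)) atTop (𝓝 2) := by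
    refine hrecip.congr' ?_
    filter_upwards [eventually_ne_atTop 0] with Γ hΓ
    have : (Γ : ℂ) ≠ 0 := ofReal_ne_zero.mpr hΓ
    field_simp
  simpa [show (1 : ℂ) - 2 = -1 by norm_num] using (tendsto_const_nhds (x := (1 : ℂ))).sub hquot

lemma tendsto_integral_mul_of_norm_le_one {α ι : Type*} [MeasurableSpace α] {μ : Measure α}
    {l : Filter ι} [l.IsCountablyGenerated] {g : α → ℂ} {m : ι → α → ℂ} {c : ℂ}
    (hg : Integrable g μ) (hm : ∀ i, AEStronglyMeasurable (m i) μ)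
    (hm_le : ∀ i a, ‖m i a‖ ≤ 1) (hm_lim : ∀ a, Tendsto (fun i => m i a) l (𝓝 c)) :
    Tendsto (fun i => ∫ a, g a * m i a ∂μ) l (𝓝 (∫ a, g a * c ∂μ)) :=
  tendsto_integral_filter_of_dominated_convergence (fun a => ‖g a‖)
    (.of_forall fun i => hg.aestronglyMeasurable.mul (hm i))
    (.of_forall fun i => .of_forall fun a => by
      simpa [norm_mul] using mul_le_mul_of_nonneg_left (hm_le i a) (norm_nonneg (g a)))
    hg.norm (.of_forall fun a => tendsto_const_nhds.mul (hm_lim a))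

theorem overlap_tendsto_neg_one_general (ω₀ : ℝ) (f : ℝ → ℂ)
    (hf : (∫ ω : ℝ, ‖f ω‖ ^ 2) = 1) :
    Tendsto (fun Γ : ℝ => ∫ ω : ℝ, (‖f ω‖ ^ 2 : ℂ)
        * (1 - (Γ : ℂ) / ((Γ : ℂ) / 2 + Complex.I * ((ω₀ : ℂ) - (ω : ℂ)))))
      atTop (nhds (-1)) := by
  -- A non-integrable function has Bochner integral `0`, so `hf` already forces integrability.
  have hint : Integrable (fun ω : ℝ => ‖f ω‖ ^ 2) :=
    Integrable.of_integral_ne_zero (by rw [hf]; exact one_ne_zero)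
  have hint' : Integrable (fun ω : ℝ => (‖f ω‖ ^ 2 : ℂ)) := by
    simpa using hint.ofReal (𝕜 := ℂ)
  have hmass : ∫ ω : ℝ, (‖f ω‖ ^ 2 : ℂ) = 1 := by
    exact_mod_cast (integral_ofReal (𝕜 := ℂ)).trans (congrArg _ hf)
  convert tendsto_integral_mul_of_norm_le_one hint'
    (m := fun (Γ : ℝ) (ω : ℝ) => 1 - (Γ : ℂ) / ((Γ : ℂ) / 2 + I * ((ω₀ : ℂ) - ω)))
    (fun Γ => (by fun_prop : Measurable _).aestronglyMeasurable)
    (fun Γ ω => by simpa using (norm_one_sub_div_half_add_I_mul Γ (ω₀ - ω)).le)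
    (fun ω => by simpa using tendsto_one_sub_div_half_add_I_mul (ω₀ - ω)) using 2
  rw [integral_mul_const, hmass, one_mul]

/-- The two-photon overlap `η(Γ) = ∫ |f(ω̄)|² (1 − Γ/(Γ/2 + i(ω₀−ω̄))) dω̄` between
the ideal and actual scattered states tends to `−1` as the emitter linewidth `Γ`
greatly exceeds the input bandwidth. -/
theorem overlap_tendsto_neg_one (ω₀ : ℝ) (f : ℝ → ℂ)
    (hf2 : MemLp f 2 (volume : Measure ℝ))
    (hf : (∫ ω : ℝ, ‖f ω‖ ^ 2) = 1) :
    Tendsto (fun Γ : ℝ => ∫ ω : ℝ, (‖f ω‖ ^ 2 : ℂ)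
        * (1 - (Γ : ℂ) / ((Γ : ℂ) / 2 + Complex.I * ((ω₀ : ℂ) - (ω : ℂ)))))
      atTop (nhds (-1)) :=
  overlap_tendsto_neg_one_general ω₀ f hf
end

section
/- Let ω₀ ∈ ℝ and f ∈ L²(ℝ, ℂ) with ∫_ℝ |f|² = 1, and set η(Γ) = ∫_ℝ |f(ω̄)|² (1 − Γ/(Γ/2 + i(ω₀ − ω̄))) dω̄ for Γ > 0. Then the worst-case controlled-phase gate fidelity F(Γ) = min_{t ∈ [0,1]} |1 − t(1 + η(Γ))|² tends to 1 as Γ → ∞. (A single quadratically coupled two-level emitter implements a deterministic controlled-phase gate on propagating photons with fidelity approaching unity in the narrow-input limit, circumventing the no-go theorem valid for linear light-matter couplings.) -/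
/-!
The emitter is lossless: `1 - Γ/(Γ/2 + i x) = -conj(Γ/2 + i x)/(Γ/2 + i x)` has modulus one,
and for fixed detuning `x` it tends to `-1` as `Γ → ∞`. Dominated convergence (with dominating
function `|f|²`) gives `η(Γ) → -∫ |f|² = -1`, so `1 + η(Γ) → 0`. Finally
`(1 - |z|)² ≤ min_{t ∈ [0,1]} |1 - t z|² ≤ 1` for `|z| ≤ 1`, so the worst-case fidelity
tends to `1` as `z = 1 + η(Γ) → 0`.
-/

open MeasureTheory Filter Topology Complex ComplexConjugate

noncomputable section

def emitterFactor (Γ ω₀ ω : ℝ) : ℂ := 1 - Γ / (Γ / 2 + I * (ω₀ - ω))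

lemma emitterFactor_eq_neg_conj_div {Γ ω₀ ω : ℝ} (h : (Γ : ℂ) / 2 + I * (ω₀ - ω) ≠ 0) :
    emitterFactor Γ ω₀ ω =
      -conj ((Γ : ℂ) / 2 + I * (ω₀ - ω)) / ((Γ : ℂ) / 2 + I * (ω₀ - ω)) := by
  rw [emitterFactor, one_sub_div h]
  congr 1
  apply Complex.ext
  · simp [map_ofNat]
    ring
  · simp [map_ofNat]

lemma norm_emitterFactor (Γ ω₀ ω : ℝ) : ‖emitterFactor Γ ω₀ ω‖ = 1 := by
  by_cases h : (Γ : ℂ) / 2 + I * (ω₀ - ω) = 0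
  · -- junk value `Γ / 0 = 0`: the factor is `1`
    simp [emitterFactor, h]
  · rw [emitterFactor_eq_neg_conj_div h, norm_div, norm_neg, Complex.norm_conj,
      div_self (norm_ne_zero_iff.2 h)]

lemma tendsto_emitterFactor_atTop (ω₀ ω : ℝ) :
    Tendsto (fun Γ => emitterFactor Γ ω₀ ω) atTop (𝓝 (-1)) := by
  have hinv : Tendsto (fun Γ : ℝ => ((Γ⁻¹ : ℝ) : ℂ)) atTop (𝓝 0) := by
    simpa using tendsto_inv_atTop_zero.ofReal
  have hlim : Tendsto (fun Γ : ℝ => 1 - 1 / (1 / 2 + I * (ω₀ - ω) * ((Γ⁻¹ : ℝ) : ℂ))) atTop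
      (𝓝 (1 - 1 / (1 / 2 + I * (ω₀ - ω) * 0))) :=
    tendsto_const_nhds.sub (tendsto_const_nhds.div (tendsto_const_nhds.add
      (hinv.const_mul _)) (by norm_num))
  norm_num at hlim
  refine hlim.congr' ?_
  filter_upwards [eventually_gt_atTop 0] with Γ hΓ
  have hΓ' : (Γ : ℂ) ≠ 0 := by exact_mod_cast hΓ.ne'
  rw [emitterFactor]
  field_simp

theorem tendsto_integral_mul_emitterFactor_atTop (ω₀ : ℝ) {g : ℝ → ℂ} (hg : Integrable g) :
    Tendsto (fun Γ => ∫ ω, g ω * emitterFactor Γ ω₀ ω) atTop (𝓝 (-∫ ω, g ω)) := by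
  rw [← integral_neg]
  refine tendsto_integral_filter_of_dominated_convergence (fun ω => ‖g ω‖) ?_ ?_ hg.norm ?_
  · refine .of_forall fun Γ => hg.aestronglyMeasurable.mul ?_
    exact Measurable.aestronglyMeasurable (by unfold emitterFactor; fun_prop)
  · refine .of_forall fun Γ => .of_forall fun ω => ?_
    rw [norm_mul, norm_emitterFactor, mul_one]
  · refine .of_forall fun ω => ?_
    simpa using (tendsto_emitterFactor_atTop ω₀ ω).const_mul (g ω)

def worstCaseFidelity (z : ℂ) : ℝ :=
  sInf {v : ℝ | ∃ t ∈ Set.Icc (0 : ℝ) 1, v = ‖1 - (t : ℂ) * z‖ ^ 2}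

lemma worstCaseFidelity_le_one (z : ℂ) : worstCaseFidelity z ≤ 1 :=
  csInf_le ⟨0, by rintro v ⟨t, -, rfl⟩; positivity⟩ ⟨0, ⟨le_rfl, zero_le_one⟩, by simp⟩

lemma one_sub_norm_sq_le_worstCaseFidelity {z : ℂ} (hz : ‖z‖ ≤ 1) :
    (1 - ‖z‖) ^ 2 ≤ worstCaseFidelity z := by
  refine le_csInf ⟨_, 0, ⟨le_rfl, zero_le_one⟩, rfl⟩ ?_
  rintro v ⟨t, ⟨ht0, ht1⟩, rfl⟩
  have htz : ‖(t : ℂ) * z‖ ≤ ‖z‖ := by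
    rw [norm_mul, Complex.norm_real, Real.norm_of_nonneg ht0]
    exact mul_le_of_le_one_left (norm_nonneg z) ht1
  have hrev := norm_sub_norm_le (1 : ℂ) (t * z)
  rw [norm_one] at hrev
  exact pow_le_pow_left₀ (by linarith) (by linarith) 2

lemma tendsto_worstCaseFidelity_nhds_zero : Tendsto worstCaseFidelity (𝓝 0) (𝓝 1) := by
  have hlow : Tendsto (fun z : ℂ => (1 - ‖z‖) ^ 2) (𝓝 0) (𝓝 1) :=
    ((continuous_const.sub continuous_norm).pow 2).tendsto' (0 : ℂ) _ (by simp)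
  refine tendsto_of_tendsto_of_tendsto_of_le_of_le' hlow tendsto_const_nhds ?_
    (.of_forall worstCaseFidelity_le_one)
  filter_upwards [Metric.closedBall_mem_nhds (0 : ℂ) one_pos] with z hz
  exact one_sub_norm_sq_le_worstCaseFidelity (mem_closedBall_zero_iff.1 hz)

end

/-- The worst-case controlled-phase gate fidelity
`F(Γ) = min_{t∈[0,1]} |1 − t(1 + η(Γ))|²`, with
`η(Γ) = ∫ |f(ω̄)|² (1 − Γ/(Γ/2 + i(ω₀−ω̄))) dω̄`, tends to `1` as `Γ → ∞`:
a single quadratically coupled emitter implements an ideal controlled-phase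
gate in the narrow-input limit. -/
theorem cphase_gate_fidelity_tendsto_one (ω₀ : ℝ) (f : ℝ → ℂ)
    (hf2 : MemLp f 2 (volume : Measure ℝ))
    (hf : (∫ ω : ℝ, ‖f ω‖ ^ 2) = 1) :
    Tendsto (fun Γ : ℝ =>
        sInf { v : ℝ | ∃ t ∈ Set.Icc (0 : ℝ) 1,
          v = ‖(1 - (t : ℂ) * (1 + ∫ ω : ℝ, (‖f ω‖ ^ 2 : ℂ)
                * (1 - (Γ : ℂ) / ((Γ : ℂ) / 2 + Complex.I * ((ω₀ : ℂ) - (ω : ℂ))))))‖ ^ 2 })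
      atTop (nhds 1) := by
  have hint : Integrable (fun ω => ((‖f ω‖ ^ 2 : ℝ) : ℂ)) :=
    (hf2.integrable_norm_pow two_ne_zero).ofReal
  have hη := tendsto_integral_mul_emitterFactor_atTop ω₀ hint
  rw [integral_complex_ofReal, hf] at hη
  push_cast at hη
  have h1η : Tendsto (fun Γ => 1 + ∫ ω, (‖f ω‖ : ℂ) ^ 2 * emitterFactor Γ ω₀ ω) atTop (𝓝 0) := by
    simpa using hη.const_add 1
  exact tendsto_worstCaseFidelity_nhds_zero.comp h1η
end
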